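/- Let a < 0 and let (H, φ) solve the EdGB FLRW system on (a, 0] with H(0) = β > 0 and φ'(0) < 0. If H'(0) − β^2 + 3·exp(−φ(0)) > 0 and H'(0) − 3·β^4·exp(φ(0)) + β^2 < 0, then H'(t) − H(t)^2 + 3·exp(−φ(t)) > 0 for all t ∈ (a, 0]. -/

import Mathlib

/-- The EdGB FLRW system on a set `I ⊆ ℝ`: `H` is continuously differentiable and
`φ` twice continuously differentiable on `I`, and for every `t ∈ I` the Hamiltonian
constraint `3H² − 3e^φ φ' H³ = φ'²/2` and the scalar field equation
`φ'' = −3Hφ' − 3e^φ H²(H² + H')` hold. -/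
def EdGB (H φ : ℝ → ℝ) (I : Set ℝ) : Prop :=
  ContDiffOn ℝ 1 H I ∧ ContDiffOn ℝ 2 φ I ∧
  (∀ t ∈ I, 3 * H t ^ 2 - 3 * Real.exp (φ t) * deriv φ t * H t ^ 3 = (deriv φ t) ^ 2 / 2) ∧
  (∀ t ∈ I, deriv (deriv φ) t =
      -3 * H t * deriv φ t - 3 * Real.exp (φ t) * H t ^ 2 * (H t ^ 2 + deriv H t))


/-! Differentiating the Hamiltonian constraint and eliminating `φ''` with the field equation
expresses `D₃` and `D₅`, up to positive factors, through `H`, `φ'` and `e^φ` alone; wherever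
`H > 0` and `φ' < 0` this gives `D₃ < 0` and `D₅ > 0`. It remains to propagate `H > 0`,
`φ' < 0` backwards from `t = 0`. By the constraint `φ'` vanishes only where `H` does, so by the
intermediate value theorem it suffices to rule out zeros of `H`, and the largest one is ruled out
by `D₃ < 0`. -/

open Set Filter Topology Real

section ConstraintAlgebra

variable {h x e h' x' : ℝ}

theorem d3_neg_of_constraint (he : 0 < e) (hh : 0 < h) (hx : x < 0)
    (hC : 3 * h ^ 2 - 3 * e * x * h ^ 3 = x ^ 2 / 2)
    (hC' : 6 * h * h' - 3 * e * (x ^ 2 * h ^ 3 + x' * h ^ 3 + 3 * x * h ^ 2 * h') = x * x')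
    (hS : x' = -3 * h * x - 3 * e * h ^ 2 * (h ^ 2 + h')) :
    h' - 3 * e * h ^ 4 + h ^ 2 < 0 := by
  have hexh : e * x * h < 0 := by nlinarith [mul_pos he hh]
  have hden : 0 < 3 * h * (2 - 2 * e * x * h + 3 * e ^ 2 * h ^ 4) := by
    nlinarith [mul_pos (mul_pos he he) (pow_pos hh 4)]
  have hid : 3 * h * (2 - 2 * e * x * h + 3 * e ^ 2 * h ^ 4) * (h' - 3 * e * h ^ 4 + h ^ 2)
      = -12 * h ^ 3 - 27 * e ^ 3 * h ^ 9 := by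
    linear_combination hC' + (3 * e * h ^ 3 + x) * hS + (6 * h - 6 * e * h ^ 3) * hC
  nlinarith [pow_pos hh 3, mul_pos (pow_pos he 3) (pow_pos hh 9)]

theorem d5_pos_of_constraint (he : 0 < e) (hh : 0 < h) (hx : x < 0)
    (hC : 3 * h ^ 2 - 3 * e * x * h ^ 3 = x ^ 2 / 2)
    (hC' : 6 * h * h' - 3 * e * (x ^ 2 * h ^ 3 + x' * h ^ 3 + 3 * x * h ^ 2 * h') = x * x')
    (hS : x' = -3 * h * x - 3 * e * h ^ 2 * (h ^ 2 + h')) :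
    0 < h' - h ^ 2 + 3 * e⁻¹ := by
  set u := e * x * h
  set v := e * h ^ 2
  have hv : 0 < v := by positivity
  -- The constraint reads `u (u + 6 v²) = 6 v²`; the bound `u < -6 v²` is what makes the
  -- numerator below, which is linear in `u`, positive.
  have hu : u + 6 * v ^ 2 < 0 := by
    have : u * (u + 6 * v ^ 2) = 6 * v ^ 2 := by linear_combination (-2 * e ^ 2 * h ^ 2) * hC
    nlinarith [mul_pos he hh, mul_pos hv hv]
  have hP : 0 < 18 - 24 * v + 45 * v ^ 2 - 18 * v ^ 3 - u * (18 * v ^ 2 - 12 * v + 18) := by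
    nlinarith [sq_nonneg (v - 1), sq_nonneg (2 * v - 1), sq_nonneg (6 * v ^ 2 - 3 * v)]
  have hid : 3 * h * (2 - 2 * u + 3 * v ^ 2) * (e * h' - e * h ^ 2 + 3)
      = h * (18 - 24 * v + 45 * v ^ 2 - 18 * v ^ 3 - u * (18 * v ^ 2 - 12 * v + 18)) := by
    linear_combination
      e * hC' + e * (3 * e * h ^ 3 + x) * hS + (6 * e * h - 6 * e ^ 2 * h ^ 3) * hC
  have hden : 0 < 3 * h * (2 - 2 * u + 3 * v ^ 2) := by nlinarith [mul_pos hv hv]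
  have hnum : 0 < e * h' - e * h ^ 2 + 3 := by nlinarith [mul_pos hh hP]
  have : h' - h ^ 2 + 3 * e⁻¹ = (e * h' - e * h ^ 2 + 3) / e := by field_simp
  rw [this]
  positivity

end ConstraintAlgebra

theorem IsPreconnected.forall_pos_of_ne_zero {X : Type*} [TopologicalSpace X] {S : Set X}
    {f : X → ℝ} (hS : IsPreconnected S) (hf : ContinuousOn f S) (hne : ∀ x ∈ S, f x ≠ 0)
    {x₀ : X} (hx₀ : x₀ ∈ S) (hpos : 0 < f x₀) : ∀ x ∈ S, 0 < f x := by
  intro x hx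
  by_contra! hfx
  obtain ⟨y, hy, hfy⟩ := hS.intermediate_value hx hx₀ hf ⟨hfx, hpos.le⟩
  exact hne y hy hfy

theorem ContDiffOn.continuousOn_deriv_of_differentiableAt {f : ℝ → ℝ} {s : Set ℝ}
    {n : WithTop ℕ∞} (hf : ContDiffOn ℝ n f s) (hs : UniqueDiffOn ℝ s) (hn : 1 ≤ n)
    (hd : ∀ x ∈ s, DifferentiableAt ℝ f x) : ContinuousOn (deriv f) s :=
  (hf.continuousOn_derivWithin hs hn).congr fun x hx => ((hd x hx).derivWithin (hs x hx)).symm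

namespace EdGB

variable {H φ : ℝ → ℝ} {I : Set ℝ} {t : ℝ}

theorem constraint (hsys : EdGB H φ I) (ht : t ∈ I) :
    3 * H t ^ 2 - 3 * exp (φ t) * deriv φ t * H t ^ 3 = deriv φ t ^ 2 / 2 :=
  hsys.2.2.1 t ht

theorem scalar_field (hsys : EdGB H φ I) (ht : t ∈ I) :
    deriv (deriv φ) t = -3 * H t * deriv φ t - 3 * exp (φ t) * H t ^ 2 * (H t ^ 2 + deriv H t) :=
  hsys.2.2.2 t ht

theorem continuousOn_H (hsys : EdGB H φ I) : ContinuousOn H I :=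
  hsys.1.continuousOn

theorem hasDerivAt_H (hsys : EdGB H φ I) (ht : I ∈ 𝓝 t) : HasDerivAt H (deriv H t) t :=
  ((hsys.1.contDiffAt ht).differentiableAt one_ne_zero).hasDerivAt

theorem hasDerivAt_φ (hsys : EdGB H φ I) (ht : I ∈ 𝓝 t) : HasDerivAt φ (deriv φ t) t :=
  ((hsys.2.1.contDiffAt ht).differentiableAt two_ne_zero).hasDerivAt

theorem hasDerivAt_deriv_φ (hsys : EdGB H φ I) (ht : I ∈ 𝓝 t) :
    HasDerivAt (deriv φ) (deriv (deriv φ) t) t :=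
  (((hsys.2.1.mono interior_subset).deriv_of_isOpen isOpen_interior le_rfl).contDiffAt
    (interior_mem_nhds.mpr ht) |>.differentiableAt one_ne_zero).hasDerivAt

theorem deriv_constraint (hsys : EdGB H φ I) (ht : I ∈ 𝓝 t) :
    6 * H t * deriv H t - 3 * exp (φ t) * (deriv φ t ^ 2 * H t ^ 3
      + deriv (deriv φ) t * H t ^ 3 + 3 * deriv φ t * H t ^ 2 * deriv H t)
      = deriv φ t * deriv (deriv φ) t := by
  have hH := hsys.hasDerivAt_H ht
  have hφ' := hsys.hasDerivAt_deriv_φ ht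
  have hL := ((hH.pow 2).const_mul 3).sub
    ((((hsys.hasDerivAt_φ ht).exp.mul hφ').mul (hH.pow 3)).const_mul 3)
  have hR := (hφ'.pow 2).div_const 2
  have heq := hL.unique <| hR.congr_of_eventuallyEq <| by
    filter_upwards [ht] with u hu
    simp only [Pi.sub_apply, Pi.mul_apply, Pi.pow_apply]
    linear_combination hsys.constraint hu
  norm_num at heq
  linear_combination heq

theorem d3_neg (hsys : EdGB H φ I) (ht : I ∈ 𝓝 t) (hH : 0 < H t) (hφ' : deriv φ t < 0) :
    deriv H t - 3 * exp (φ t) * H t ^ 4 + H t ^ 2 < 0 :=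
  d3_neg_of_constraint (exp_pos _) hH hφ' (hsys.constraint (mem_of_mem_nhds ht))
    (hsys.deriv_constraint ht) (hsys.scalar_field (mem_of_mem_nhds ht))

theorem d5_pos (hsys : EdGB H φ I) (ht : I ∈ 𝓝 t) (hH : 0 < H t) (hφ' : deriv φ t < 0) :
    0 < deriv H t - H t ^ 2 + 3 * exp (-φ t) := by
  rw [exp_neg]
  exact d5_pos_of_constraint (exp_pos _) hH hφ' (hsys.constraint (mem_of_mem_nhds ht))
    (hsys.deriv_constraint ht) (hsys.scalar_field (mem_of_mem_nhds ht))

theorem eq_zero_of_deriv_eq_zero (hsys : EdGB H φ I) (ht : t ∈ I) (h : deriv φ t = 0) :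
    H t = 0 := by
  have := hsys.constraint ht
  rw [h] at this
  nlinarith

theorem pos_of_ne_zero (hsys : EdGB H φ I) {J : Set ℝ} (hJ : IsPreconnected J) (hJI : J ⊆ I)
    (hφc : ContinuousOn (deriv φ) J) (hne : ∀ t ∈ J, H t ≠ 0) {t₁ : ℝ} (ht₁ : t₁ ∈ J)
    (hH : 0 < H t₁) (hφ' : deriv φ t₁ < 0) : ∀ t ∈ J, 0 < H t ∧ deriv φ t < 0 := fun t ht =>
  ⟨hJ.forall_pos_of_ne_zero (hsys.continuousOn_H.mono hJI) hne ht₁ hH t ht,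
    neg_pos.mp <| hJ.forall_pos_of_ne_zero hφc.neg
      (fun s hs h => hne s hs <| hsys.eq_zero_of_deriv_eq_zero (hJI hs) (neg_eq_zero.mp h))
      ht₁ (neg_pos.mpr hφ') t ht⟩

/-- Just to the right of a zero of `H` we have `3 e^φ H² < 1`, so there `D₃ < 0` forces
`H' < H² (3 e^φ H² - 1) < 0`, and `H` cannot leave `0` upwards. -/
theorem ne_zero_of_forall_Ioo {t₀ t₂ : ℝ} (hsys : EdGB H φ I) (hlt : t₀ < t₂)
    (hsub : Icc t₀ t₂ ⊆ I) (hpos : ∀ t ∈ Ioo t₀ t₂, 0 < H t ∧ deriv φ t < 0) : H t₀ ≠ 0 := by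
  intro hH₀
  have hg : ContinuousOn (fun t => 3 * exp (φ t) * H t ^ 2) (Icc t₀ t₂) :=
    (continuousOn_const.mul (hsys.2.1.continuousOn.mono hsub).rexp).mul
      ((hsys.continuousOn_H.mono hsub).pow 2)
  have hsmall : ∀ᶠ t in 𝓝[>] t₀, 3 * exp (φ t) * H t ^ 2 < 1 ∧ t ∈ Ioo t₀ t₂ := by
    refine (((hg t₀ (left_mem_Icc.mpr hlt.le)).mono_of_mem_nhdsWithin (Icc_mem_nhdsGT hlt))
      |>.eventually (gt_mem_nhds ?_)).and (Ioo_mem_nhdsGT hlt)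
    simp [hH₀]
  obtain ⟨u, hu : t₀ < u, hIoo⟩ := mem_nhdsGT_iff_exists_Ioo_subset.mp hsmall
  obtain ⟨m, hm⟩ := nonempty_Ioo.mpr hu
  have hanti : StrictAntiOn H (Icc t₀ m) := by
    refine strictAntiOn_of_deriv_neg (convex_Icc _ _) (hsys.continuousOn_H.mono
      ((Icc_subset_Icc_right (hIoo hm).2.2.le).trans hsub)) fun x hx => ?_
    rw [interior_Icc] at hx
    obtain ⟨hgx, hx₂⟩ := hIoo ⟨hx.1, hx.2.trans hm.2⟩
    obtain ⟨hHx, hφx⟩ := hpos x hx₂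
    have hI : I ∈ 𝓝 x := mem_of_superset (isOpen_Ioo.mem_nhds hx₂) (Ioo_subset_Icc_self.trans hsub)
    nlinarith [hsys.d3_neg hI hHx hφx, pow_pos hHx 2]
  have := hanti (left_mem_Icc.mpr hm.1.le) (right_mem_Icc.mpr hm.1.le) hm.1
  linarith [(hpos m (hIoo hm).2).1]

theorem pos_and_deriv_neg_of_Ioc {a b : ℝ} (hsys : EdGB H φ (Ioc a b)) (hHb : 0 < H b)
    (hφb : deriv φ b < 0) : ∀ t ∈ Ioc a b, 0 < H t ∧ deriv φ t < 0 := by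
  intro t ht
  have hb : b ∈ Ioc a b := right_mem_Ioc.mpr (ht.1.trans_le ht.2)
  have hφc : ContinuousOn (deriv φ) (Ioc a b) := by
    refine hsys.2.1.continuousOn_deriv_of_differentiableAt (uniqueDiffOn_Ioc a b) one_le_two
      fun s hs => ?_
    rcases hs.2.eq_or_lt with rfl | hlt
    · exact differentiableAt_of_deriv_ne_zero hφb.ne
    · exact (hsys.hasDerivAt_φ (Ioc_mem_nhds hs.1 hlt)).differentiableAt
  refine hsys.pos_of_ne_zero isPreconnected_Ioc subset_rfl hφc (fun s hs hHs => ?_) hb hHb hφb t ht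
  have hK : IsCompact (Icc s b ∩ H ⁻¹' {0}) :=
    isCompact_Icc.of_isClosed_subset
      ((hsys.continuousOn_H.mono (Icc_subset_Ioc hs.1 le_rfl)).preimage_isClosed_of_isClosed
        isClosed_Icc isClosed_singleton) inter_subset_left
  obtain ⟨t₀, ⟨ht₀, hHt₀⟩, hmax⟩ := hK.exists_isGreatest ⟨s, left_mem_Icc.mpr hs.2, hHs⟩
  have ht₀b : t₀ < b := ht₀.2.lt_of_ne (by rintro rfl; exact hHb.ne' hHt₀)
  have hsub : Icc t₀ b ⊆ Ioc a b := Icc_subset_Ioc (hs.1.trans_le ht₀.1) le_rfl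
  have hright := hsys.pos_of_ne_zero isPreconnected_Ioc (Ioc_subset_Icc_self.trans hsub)
    (hφc.mono (Ioc_subset_Icc_self.trans hsub))
    (fun u hu hHu => hu.1.not_ge (hmax ⟨⟨ht₀.1.trans hu.1.le, hu.2⟩, hHu⟩))
    (right_mem_Ioc.mpr ht₀b) hHb hφb
  exact hsys.ne_zero_of_forall_Ioo ht₀b hsub (fun u hu => hright u (Ioo_subset_Ioc_self hu)) hHt₀

end EdGB

theorem stmt_17_general (a β : ℝ) (H φ : ℝ → ℝ)
    (hsys : EdGB H φ (Set.Ioc a 0))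
    (h0 : H 0 = β) (hβ : 0 < β) (hφ'0 : deriv φ 0 < 0)
    (hD50 : deriv H 0 - β ^ 2 + 3 * Real.exp (-φ 0) > 0) :
    ∀ t ∈ Set.Ioc a 0,
      deriv H t - H t ^ 2 + 3 * Real.exp (-φ t) > 0 := by
  intro t ht
  rcases ht.2.eq_or_lt with rfl | hlt
  · rwa [h0]
  obtain ⟨hH, hφ'⟩ := hsys.pos_and_deriv_neg_of_Ioc (h0 ▸ hβ) hφ'0 t ht
  exact hsys.d5_pos (Ioc_mem_nhds ht.1 hlt) hH hφ'

/-- Sign preservation of `D₅ = H' − H² + 3e^{−φ}` backward in time: if `(H, φ)`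
solves the EdGB FLRW system on `(a, 0]` with `H(0) = β > 0`, `φ'(0) < 0`,
`D₅(0) > 0` and `D₃(0) < 0`, then `D₅(t) > 0` for all `t ∈ (a, 0]`. -/
theorem stmt_17 (a β : ℝ) (ha : a < 0) (H φ : ℝ → ℝ)
    (hsys : EdGB H φ (Set.Ioc a 0))
    (h0 : H 0 = β) (hβ : 0 < β) (hφ'0 : deriv φ 0 < 0)
    (hD50 : deriv H 0 - β ^ 2 + 3 * Real.exp (-φ 0) > 0)
    (hD30 : deriv H 0 - 3 * β ^ 4 * Real.exp (φ 0) + β ^ 2 < 0) :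
    ∀ t ∈ Set.Ioc a 0,
      deriv H t - H t ^ 2 + 3 * Real.exp (-φ t) > 0 :=
  stmt_17_general a β H φ hsys h0 hβ hφ'0 hD50
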